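/- Let w be a weighted graph on a finite vertex set V whose support graph is connected, with Laplacian L, and let T be a spanning tree of the support graph. Then for every edge e = {u,v} with w(u,v) > 0, the weighted effective resistance satisfies w(u,v) · (χ_u − χ_v)ᵀ L⁺ (χ_u − χ_v) ≤ stretch_T(e). -/

import Mathlib

/-!
Put `φ = L⁺ (χ_u - χ_v)`. Since the support graph is connected, the kernel of `L` consists of the
constants, so `L φ = χ_u - χ_v`, and the effective resistance `R = φ u - φ v` equals the energy
`φᵀ L φ = ½ ∑ₓ ∑ᵧ w(x,y) (φ x - φ y)²`. Telescoping `φ u - φ v` along the tree path `P` and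
applying Cauchy–Schwarz gives
`R² ≤ (∑_{e ∈ P} 1 / w_e) (∑_{e ∈ P} w_e (Δ_e φ)²) ≤ (∑_{e ∈ P} 1 / w_e) R`,
the last step because a path uses each edge only once.
-/

open Matrix Finset

section Sym2Sum

variable {V : Type*} [Fintype V] [DecidableEq V]

lemma sum_fiber_sym2Mk_eq_two_mul_lift {F : V → V → ℝ} (hF : ∀ a b, F a b = F b a)
    {e : Sym2 V} (he : ¬ e.IsDiag) :
    ∑ z : V × V with s(z.1, z.2) = e, F z.1 z.2 = 2 * Sym2.lift ⟨F, hF⟩ e := by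
  induction e using Sym2.ind with
  | _ a b =>
  have hab : a ≠ b := by simpa using he
  have hfiber : ({z : V × V | s(z.1, z.2) = s(a, b)} : Finset (V × V)) = {(a, b), (b, a)} := by
    ext ⟨x, y⟩
    simp
  rw [hfiber, sum_pair (by simp [hab]), Sym2.lift_mk, hF b a]
  ring

lemma two_mul_sum_sym2_lift_le_sum_sum {F : V → V → ℝ} (hF : ∀ a b, F a b = F b a)
    (hF0 : ∀ a b, 0 ≤ F a b) {S : Finset (Sym2 V)} (hS : ∀ e ∈ S, ¬ e.IsDiag) :
    2 * ∑ e ∈ S, Sym2.lift ⟨F, hF⟩ e ≤ ∑ a, ∑ b, F a b := by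
  calc 2 * ∑ e ∈ S, Sym2.lift ⟨F, hF⟩ e
      = ∑ e ∈ S, ∑ z : V × V with s(z.1, z.2) = e, F z.1 z.2 := by
        rw [mul_sum]
        exact sum_congr rfl fun e he => (sum_fiber_sym2Mk_eq_two_mul_lift hF (hS e he)).symm
    _ ≤ ∑ e, ∑ z : V × V with s(z.1, z.2) = e, F z.1 z.2 :=
        sum_le_univ_sum_of_nonneg fun e => sum_nonneg fun z _ => hF0 _ _
    _ = ∑ a, ∑ b, F a b := by
        rw [sum_fiberwise, ← univ_product_univ, sum_product]

end Sym2Sum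

namespace SimpleGraph.Walk

variable {V : Type*} {G : SimpleGraph V}

lemma sum_darts_sub {M : Type*} [AddCommGroup M] (φ : V → M) {u v : V} (p : G.Walk u v) :
    (p.darts.map fun d => φ d.fst - φ d.snd).sum = φ u - φ v := by
  induction p with
  | nil => simp
  | cons h p ih => simp only [darts_cons, List.map_cons, List.sum_cons, ih]; abel

lemma IsTrail.two_mul_sum_darts_le [Fintype V] [DecidableEq V] {F : V → V → ℝ}
    (hF : ∀ a b, F a b = F b a) (hF0 : ∀ a b, 0 ≤ F a b) {u v : V} {p : G.Walk u v}
    (hp : p.IsTrail) :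
    2 * (p.darts.map fun d => F d.fst d.snd).sum ≤ ∑ a, ∑ b, F a b := by
  have hedges : (p.darts.map fun d => F d.fst d.snd) = p.edges.map (Sym2.lift ⟨F, hF⟩) := by
    simp [edges, Function.comp_def, Dart.edge]
  rw [hedges, ← List.sum_toFinset _ hp.edges_nodup]
  exact two_mul_sum_sym2_lift_le_sum_sum hF hF0 fun e he =>
    G.not_isDiag_of_mem_edgeSet (p.edges_subset_edgeSet (List.mem_toFinset.mp he))

end SimpleGraph.Walk

section WeightedLaplacian

variable {V : Type*} [Fintype V] [DecidableEq V] {w : V → V → ℝ}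

variable (w) in
noncomputable def weightedLaplacian : Matrix V V ℝ :=
  Matrix.of fun u v => if u = v then ∑ x, w u x else - w u v

lemma weightedLaplacian_mulVec_apply (hdiag : ∀ u, w u u = 0) (φ : V → ℝ) (x : V) :
    (weightedLaplacian w *ᵥ φ) x = ∑ y, w x y * (φ x - φ y) := by
  have hrow : ∀ y, weightedLaplacian w x y * φ y
      = (if x = y then (∑ z, w x z) * φ x else 0) - w x y * φ y := by
    intro y
    by_cases h : x = y
    · subst h; simp [weightedLaplacian, hdiag]
    · simp [weightedLaplacian, h]
  simp only [mulVec, dotProduct, hrow, sum_sub_distrib, sum_ite_eq, mem_univ, if_true, sum_mul,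
    mul_sub]

lemma weightedLaplacian_transpose (hsym : ∀ u v, w u v = w v u) :
    (weightedLaplacian w)ᵀ = weightedLaplacian w := by
  ext a b
  by_cases h : a = b
  · subst h; rfl
  · simp [weightedLaplacian, h, Ne.symm h, hsym a b]

lemma sum_weightedLaplacian_mulVec (hsym : ∀ u v, w u v = w v u) (hdiag : ∀ u, w u u = 0)
    (φ : V → ℝ) : ∑ x, (weightedLaplacian w *ᵥ φ) x = 0 := by
  have hconst : weightedLaplacian w *ᵥ (fun _ => 1) = 0 := by
    ext x; simp [weightedLaplacian_mulVec_apply hdiag]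
  calc ∑ x, (weightedLaplacian w *ᵥ φ) x = (fun _ => 1) ⬝ᵥ (weightedLaplacian w *ᵥ φ) := by
        simp [dotProduct]
    _ = ((weightedLaplacian w)ᵀ *ᵥ fun _ => 1) ⬝ᵥ φ := by
        rw [dotProduct_mulVec, mulVec_transpose]
    _ = 0 := by rw [weightedLaplacian_transpose hsym, hconst, zero_dotProduct]

lemma two_mul_dotProduct_weightedLaplacian_mulVec (hsym : ∀ u v, w u v = w v u)
    (hdiag : ∀ u, w u u = 0) (φ : V → ℝ) :
    2 * (φ ⬝ᵥ (weightedLaplacian w *ᵥ φ)) = ∑ x, ∑ y, w x y * (φ x - φ y) ^ 2 := by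
  have hE : φ ⬝ᵥ (weightedLaplacian w *ᵥ φ) = ∑ x, ∑ y, w x y * (φ x - φ y) * φ x := by
    simp only [dotProduct, weightedLaplacian_mulVec_apply hdiag, mul_sum]
    exact sum_congr rfl fun x _ => sum_congr rfl fun y _ => by ring
  have hE' : φ ⬝ᵥ (weightedLaplacian w *ᵥ φ) = ∑ x, ∑ y, w x y * (φ y - φ x) * φ y := by
    rw [hE, sum_comm]
    exact sum_congr rfl fun x _ => sum_congr rfl fun y _ => by rw [hsym]
  rw [two_mul]
  nth_rw 1 [hE]
  rw [hE', ← sum_add_distrib]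
  exact sum_congr rfl fun x _ => by rw [← sum_add_distrib]; exact sum_congr rfl fun y _ => by ring

lemma dotProduct_weightedLaplacian_mulVec_nonneg (hsym : ∀ u v, w u v = w v u)
    (hnn : ∀ u v, 0 ≤ w u v) (hdiag : ∀ u, w u u = 0) (φ : V → ℝ) :
    0 ≤ φ ⬝ᵥ (weightedLaplacian w *ᵥ φ) := by
  have hsum : 0 ≤ ∑ x, ∑ y, w x y * (φ x - φ y) ^ 2 :=
    sum_nonneg fun x _ => sum_nonneg fun y _ => mul_nonneg (hnn x y) (sq_nonneg _)
  linarith [two_mul_dotProduct_weightedLaplacian_mulVec hsym hdiag φ]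

lemma eq_of_weightedLaplacian_mulVec_eq_zero (hsym : ∀ u v, w u v = w v u)
    (hnn : ∀ u v, 0 ≤ w u v) (hdiag : ∀ u, w u u = 0) {G : SimpleGraph V}
    (hG : ∀ ⦃a b⦄, G.Adj a b → 0 < w a b) (hconn : G.Preconnected) {z : V → ℝ}
    (hz : weightedLaplacian w *ᵥ z = 0) (a b : V) : z a = z b := by
  have hnn' : ∀ x y, 0 ≤ w x y * (z x - z y) ^ 2 := fun x y => mul_nonneg (hnn x y) (sq_nonneg _)
  have hterm : ∀ x y, w x y * (z x - z y) ^ 2 = 0 := by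
    have henergy := two_mul_dotProduct_weightedLaplacian_mulVec hsym hdiag z
    rw [hz, dotProduct_zero, mul_zero, eq_comm] at henergy
    intro x y
    have hx := (sum_eq_zero_iff_of_nonneg fun x _ => sum_nonneg fun y _ => hnn' x y).mp
      henergy x (mem_univ x)
    exact (sum_eq_zero_iff_of_nonneg fun y _ => hnn' x y).mp hx y (mem_univ y)
  have hadj : ∀ ⦃x y⦄, G.Adj x y → z x = z y := fun x y hxy => by
    have := hterm x y
    rwa [mul_eq_zero, or_iff_right (hG hxy).ne', sq_eq_zero_iff, sub_eq_zero] at this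
  obtain ⟨p⟩ := hconn a b
  induction p with
  | nil => rfl
  | cons h _ ih => exact (hadj h).trans ih

lemma weightedLaplacian_mulVec_mulVec_eq_self (hsym : ∀ u v, w u v = w v u)
    (hnn : ∀ u v, 0 ≤ w u v) (hdiag : ∀ u, w u u = 0) {G : SimpleGraph V}
    (hG : ∀ ⦃a b⦄, G.Adj a b → 0 < w a b) (hconn : G.Preconnected) {Lp : Matrix V V ℝ}
    (hp1 : weightedLaplacian w * Lp * weightedLaplacian w = weightedLaplacian w)
    (hp3 : (weightedLaplacian w * Lp)ᵀ = weightedLaplacian w * Lp)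
    {x : V → ℝ} (hx : ∑ a, x a = 0) :
    weightedLaplacian w *ᵥ (Lp *ᵥ x) = x := by
  have hLsym := weightedLaplacian_transpose hsym
  have hLsum := sum_weightedLaplacian_mulVec hsym hdiag (Lp *ᵥ x)
  set L := weightedLaplacian w
  have hLL : L * (L * Lp) = L := by
    simpa only [transpose_mul, hp3, hLsym] using congrArg transpose hp1
  set r := x - L *ᵥ (Lp *ᵥ x)
  have hr : L *ᵥ r = 0 := by
    rw [mulVec_sub, mulVec_mulVec, mulVec_mulVec, Matrix.mul_assoc, hLL, sub_self]
  have hsum : ∑ a, r a = 0 := by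
    simp only [r, Pi.sub_apply, sum_sub_distrib, hx, hLsum, sub_zero]
  have hzero (a : V) : r a = 0 := by
    have hconst := eq_of_weightedLaplacian_mulVec_eq_zero hsym hnn hdiag hG hconn hr
    have hcard : (0 : ℝ) < Fintype.card V := by exact_mod_cast Fintype.card_pos_iff.mpr ⟨a⟩
    rw [sum_congr rfl fun b _ => hconst b a, sum_const, card_univ, nsmul_eq_mul] at hsum
    exact (mul_eq_zero.mp hsum).resolve_left hcard.ne'
  funext a
  linarith [hzero a, show r a = x a - (L *ᵥ (Lp *ᵥ x)) a from rfl]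

theorem sq_sub_le_sum_edges_inv_mul_dotProduct_weightedLaplacian
    (hsym : ∀ u v, w u v = w v u) (hnn : ∀ u v, 0 ≤ w u v) (hdiag : ∀ u, w u u = 0)
    {G : SimpleGraph V} (hG : ∀ ⦃a b⦄, G.Adj a b → 0 < w a b) {u v : V} {p : G.Walk u v}
    (hp : p.IsTrail) (φ : V → ℝ) :
    (φ u - φ v) ^ 2 ≤ (p.edges.map fun e => 1 / Sym2.lift ⟨w, hsym⟩ e).sum *
      (φ ⬝ᵥ (weightedLaplacian w *ᵥ φ)) := by
  set D := p.darts.toFinset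
  have hD : p.darts.Nodup := hp.edges_nodup.of_map _
  have hdrop : φ u - φ v = ∑ d ∈ D, (φ d.fst - φ d.snd) := by
    rw [List.sum_toFinset _ hD, p.sum_darts_sub]
  have hstretch : (p.edges.map fun e => 1 / Sym2.lift ⟨w, hsym⟩ e).sum
      = ∑ d ∈ D, 1 / w d.fst d.snd := by
    rw [List.sum_toFinset _ hD]
    simp [SimpleGraph.Walk.edges, Function.comp_def, SimpleGraph.Dart.edge]
  have henergy : ∑ d ∈ D, w d.fst d.snd * (φ d.fst - φ d.snd) ^ 2
      ≤ φ ⬝ᵥ (weightedLaplacian w *ᵥ φ) := by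
    have := hp.two_mul_sum_darts_le (F := fun a b => w a b * (φ a - φ b) ^ 2)
      (fun a b => by rw [hsym]; ring) fun a b => mul_nonneg (hnn a b) (sq_nonneg _)
    rw [← two_mul_dotProduct_weightedLaplacian_mulVec hsym hdiag] at this
    rw [List.sum_toFinset _ hD]
    linarith
  rw [hdrop, hstretch]
  calc (∑ d ∈ D, (φ d.fst - φ d.snd)) ^ 2
      ≤ (∑ d ∈ D, 1 / w d.fst d.snd) * ∑ d ∈ D, w d.fst d.snd * (φ d.fst - φ d.snd) ^ 2 :=
        sum_sq_le_sum_mul_sum_of_sq_le_mul D (fun d _ => (one_div_pos.2 (hG d.adj)).le)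
          (fun d _ => mul_nonneg (hG d.adj).le (sq_nonneg _))
          fun d _ => by rw [one_div, inv_mul_cancel_left₀ (hG d.adj).ne']
    _ ≤ _ := by
        gcongr
        exact sum_nonneg fun d _ => (one_div_pos.2 (hG d.adj)).le

theorem sub_le_sum_edges_inv_of_dotProduct_weightedLaplacian_eq
    (hsym : ∀ u v, w u v = w v u) (hnn : ∀ u v, 0 ≤ w u v) (hdiag : ∀ u, w u u = 0)
    {G : SimpleGraph V} (hG : ∀ ⦃a b⦄, G.Adj a b → 0 < w a b) {u v : V} {p : G.Walk u v}
    (hp : p.IsTrail) {φ : V → ℝ} (hφ : φ ⬝ᵥ (weightedLaplacian w *ᵥ φ) = φ u - φ v) :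
    φ u - φ v ≤ (p.edges.map fun e => 1 / Sym2.lift ⟨w, hsym⟩ e).sum := by
  have hstretch : 0 ≤ (p.edges.map fun e => 1 / Sym2.lift ⟨w, hsym⟩ e).sum :=
    List.sum_nonneg fun x hx => by
      obtain ⟨e, -, rfl⟩ := List.mem_map.mp hx
      induction e using Sym2.ind with | _ a b => exact one_div_nonneg.2 (hnn a b)
  have hdrop := hφ ▸ dotProduct_weightedLaplacian_mulVec_nonneg hsym hnn hdiag φ
  have hsq := sq_sub_le_sum_edges_inv_mul_dotProduct_weightedLaplacian hsym hnn hdiag hG hp φ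
  rw [hφ] at hsq
  nlinarith

end WeightedLaplacian

theorem weighted_effective_resistance_le_stretch_general {V : Type*} [Fintype V] [DecidableEq V]
    (w : V → V → ℝ) (hsym : ∀ u v, w u v = w v u)
    (hnn : ∀ u v, 0 ≤ w u v) (hdiag : ∀ u, w u u = 0)
    (G : SimpleGraph V) (hG : ∀ u v, G.Adj u v ↔ 0 < w u v) (hconn : G.Connected)
    (L Lp : Matrix V V ℝ)
    (hL : L = Matrix.of fun u v => if u = v then ∑ x, w u x else - w u v)
    (hp1 : L * Lp * L = L)
    (hp3 : (L * Lp)ᵀ = L * Lp)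
    (T : SimpleGraph V) (hTG : T ≤ G)
    (u v : V)
    (p : T.Walk u v) (hp : p.IsPath) :
    w u v * ((Pi.single u 1 - Pi.single v 1 : V → ℝ) ⬝ᵥ
        (Lp *ᵥ (Pi.single u 1 - Pi.single v 1 : V → ℝ)))
      ≤ w u v * (p.edges.map fun e => 1 / Sym2.lift ⟨w, hsym⟩ e).sum := by
  obtain rfl : L = weightedLaplacian w := hL
  have hGw : ∀ ⦃a b⦄, G.Adj a b → 0 < w a b := fun a b => (hG a b).mp
  set χ : V → ℝ := Pi.single u 1 - Pi.single v 1
  set φ := Lp *ᵥ χ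
  have hLφ : weightedLaplacian w *ᵥ φ = χ :=
    weightedLaplacian_mulVec_mulVec_eq_self hsym hnn hdiag hGw hconn.preconnected hp1 hp3
      (by simp [χ, sum_sub_distrib])
  have hdrop : χ ⬝ᵥ φ = φ u - φ v := by simp [χ, sub_dotProduct]
  have henergy : φ ⬝ᵥ (weightedLaplacian w *ᵥ φ) = φ u - φ v := by
    rw [hLφ, dotProduct_comm, hdrop]
  rw [hdrop]
  exact mul_le_mul_of_nonneg_left (sub_le_sum_edges_inv_of_dotProduct_weightedLaplacian_eq
    hsym hnn hdiag (fun a b h => hGw (hTG h)) hp.isTrail henergy) (hnn u v)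

/-- Rayleigh monotonicity.  For a spanning tree `T` of the support graph
of a connected weighted graph, the weighted effective resistance of any edge is at most its
stretch over `T`. -/
theorem weighted_effective_resistance_le_stretch {V : Type*} [Fintype V] [DecidableEq V]
    (w : V → V → ℝ) (hsym : ∀ u v, w u v = w v u)
    (hnn : ∀ u v, 0 ≤ w u v) (hdiag : ∀ u, w u u = 0)
    (G : SimpleGraph V) (hG : ∀ u v, G.Adj u v ↔ 0 < w u v) (hconn : G.Connected)
    (L Lp : Matrix V V ℝ)
    (hL : L = Matrix.of fun u v => if u = v then ∑ x, w u x else - w u v)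
    (hp1 : L * Lp * L = L) (hp2 : Lp * L * Lp = Lp)
    (hp3 : (L * Lp)ᵀ = L * Lp) (hp4 : (Lp * L)ᵀ = Lp * L)
    (T : SimpleGraph V) (hTG : T ≤ G) (hTconn : T.Connected) (hTacyc : T.IsAcyclic)
    (u v : V) (huv : 0 < w u v)
    (p : T.Walk u v) (hp : p.IsPath) :
    w u v * ((Pi.single u 1 - Pi.single v 1 : V → ℝ) ⬝ᵥ
        (Lp *ᵥ (Pi.single u 1 - Pi.single v 1 : V → ℝ)))
      ≤ w u v * (p.edges.map fun e => 1 / Sym2.lift ⟨w, hsym⟩ e).sum :=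
  weighted_effective_resistance_le_stretch_general w hsym hnn hdiag G hG hconn L Lp hL hp1 hp3 T hTG
    u v p hp
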